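/- arXiv:2605.29125 — 2 statements merged into one kernel-verified Lean document; each statement's English description precedes it below -/
import Mathlib

section
/- Let X be a set and let H and G be two subgroups of the symmetric group on X which commute elementwise (every element of H commutes with every element of G). Suppose both H and G act transitively on X and at least one of them is abelian. Then H = G. -/
/-- A permutation commuting with every element of a transitive subgroup and
fixing a point is the identity. -/
lemma comm_trans_fix_eq_one {X : Type*} (H : Subgroup (Equiv.Perm X))
    (htrans : ∀ x y : X, ∃ h ∈ H, h x = y) (k : Equiv.Perm X)
    (hk : ∀ h ∈ H, k * h = h * k) (x₀ : X) (hfix : k x₀ = x₀) : k = 1 := by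
  ext y
  obtain ⟨h, hH, hy⟩ := htrans x₀ y
  have := congrArg (fun p : Equiv.Perm X => p x₀) (hk h hH)
  simp only [Equiv.Perm.mul_apply] at this
  simp [← hy, this, hfix]

lemma aux_incl {X : Type*} (H G : Subgroup (Equiv.Perm X))
    (hcomm : ∀ h ∈ H, ∀ g ∈ G, h * g = g * h)
    (hHtrans : ∀ x y : X, ∃ h ∈ H, h x = y)
    (hGtrans : ∀ x y : X, ∃ g ∈ G, g x = y)
    (hab : ∀ a ∈ H, ∀ b ∈ H, a * b = b * a) (x₀ : X) : H = G := by
  have key : ∀ g : Equiv.Perm X, (∀ h ∈ H, g * h = h * g) →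
      ∀ h ∈ H, h x₀ = g x₀ → g = h := by
    intro g hg h hH hx
    have : h⁻¹ * g = 1 := by
      refine comm_trans_fix_eq_one H hHtrans _ ?_ x₀ ?_
      · intro h' hH'
        have c1 : h⁻¹ * h' = h' * h⁻¹ := by
          have := hab h' hH' h⁻¹ (H.inv_mem hH)
          simpa using this.symm
        have c2 := hg h' hH'
        rw [mul_assoc, c2, ← mul_assoc, c1, mul_assoc]
      · simp only [Equiv.Perm.mul_apply, ← hx]
        simp
    have := congrArg (fun p => h * p) this
    simpa [← mul_assoc] using this
  apply le_antisymm
  · intro h hH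
    obtain ⟨g, hG, hx⟩ := hGtrans x₀ (h x₀)
    have hg : ∀ h' ∈ H, g * h' = h' * g := fun h' hH' => (hcomm h' hH' g hG).symm
    obtain ⟨h', hH', hx'⟩ := hHtrans x₀ (g x₀)
    -- use key with g commuting; show h = g
    have : g = h := key g hg h hH hx.symm
    rwa [← this]
  · intro g hG
    obtain ⟨h, hH, hx⟩ := hHtrans x₀ (g x₀)
    have hg : ∀ h' ∈ H, g * h' = h' * g := fun h' hH' => (hcomm h' hH' g hG).symm
    have : g = h := key g hg h hH hx
    rwa [this]

/-- Two elementwise-commuting transitive subgroups of the symmetric group on a set,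
one of which is abelian, are equal. -/
theorem two_commuting_transitive_subgroups_eq {X : Type*} [Nonempty X]
    (H G : Subgroup (Equiv.Perm X))
    (hcomm : ∀ h ∈ H, ∀ g ∈ G, h * g = g * h)
    (hHtrans : ∀ x y : X, ∃ h ∈ H, h x = y)
    (hGtrans : ∀ x y : X, ∃ g ∈ G, g x = y)
    (hab : (∀ a ∈ H, ∀ b ∈ H, a * b = b * a) ∨ (∀ a ∈ G, ∀ b ∈ G, a * b = b * a)) :
    H = G := by
  obtain ⟨x₀⟩ := ‹Nonempty X›
  rcases hab with hab | hab
  · exact aux_incl H G hcomm hHtrans hGtrans hab x₀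
  · exact (aux_incl G H (fun g hg h hh => (hcomm h hh g hg).symm) hGtrans hHtrans hab x₀).symm
end

section
/- Let S be a semigroup. If e₊, e₋, e₊₋, e₋₊ are idempotents of S satisfying the relations e₊e₊₋ = e₊₋ = e₊₋e₋, e₊₋e₊ = e₊ = e₊e₋₊, e₋e₋₊ = e₋₊ = e₋₊e₊, and e₋e₊₋ = e₋ = e₋₊e₋, then the map x ↦ e₋₊ x e₋ from H₊ = e₊Se₊ to H₋ = e₋Se₋ satisfies (e₋₊ x e₋)(e₋₊ y e₋) = e₋₊ (x y) e₋ for all x, y ∈ H₊. -/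
/-- Given four idempotents e₊, e₋, e₊₋, e₋₊ in a semigroup satisfying the relations of
Section 6.1, the map x ↦ e₋₊ x e₋ from H₊ = e₊Se₊ to H₋ = e₋Se₋ is multiplicative. -/
theorem idempotent_transfer_multiplicative {S : Type*} [Semigroup S]
    (ep em epm emp : S)
    (hep : ep * ep = ep) (hem : em * em = em)
    (hepm : epm * epm = epm) (hemp : emp * emp = emp)
    (r1 : ep * epm = epm) (r2 : epm * em = epm)
    (r3 : epm * ep = ep) (r4 : ep * emp = ep)
    (r5 : em * emp = emp) (r6 : emp * ep = emp)
    (r7 : em * epm = em) (r8 : emp * em = em) :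
    ∀ x y : S, ep * x * ep = x → ep * y * ep = y →
      (emp * x * em) * (emp * y * em) = emp * (x * y) * em := by
  intro x y hx hy
  have hxe : x * emp = x := by
    conv_lhs => rw [← hx]
    rw [mul_assoc, mul_assoc, r4, ← mul_assoc, hx]
  calc (emp * x * em) * (emp * y * em)
      = emp * (x * (em * emp) * y) * em := by simp only [mul_assoc]
    _ = emp * (x * y) * em := by rw [r5, hxe]
end
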